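/- If a feasible solution to the 4-level facility location problem does not serve a closed retail store m, and m is opened and served via a path (n,k,j,m) (all within upper bounds), then the objective value changes by exactly R_m - c_{jm} - c_{kj} - c_{nk} - fs_m + Δ1 + Δ2 + Δ3, where Δ1 = -fd_j if m will be the only store served by distribution center j and 0 otherwise, Δ2 = -fw_k if m will be the only store served by warehouse k and 0 otherwise, and Δ3 = -fp_n if m will be the only store served by plant n and 0 otherwise. -/
import Mathlib


open Finset

/-- Data of a 4-level facility location problem: plants `P`, warehouses `W`,
distribution centers `D`, retail stores `S`; per-store arc transportation costs,
one-time fixed costs, and revenues. -/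
structure FLPData (P W D S : Type*) where
  cNK : P → W → ℝ
  cKJ : W → D → ℝ
  cJM : D → S → ℝ
  fp : P → ℝ
  fw : W → ℝ
  fd : D → ℝ
  fs : S → ℝ
  R : S → ℝ

variable {P W D S : Type*} [DecidableEq P] [DecidableEq W] [DecidableEq D] [DecidableEq S]

/-- Total profit of a solution: a finite set `O` of served (open) stores together
with a path assignment `π` sending each store to its (plant, warehouse, DC).
A facility is open iff it serves at least one open store; its fixed cost is
incurred once.  Objective = revenue − fixed costs − transportation costs. -/
def TP (F : FLPData P W D S) (O : Finset S) (π : S → P × W × D) : ℝ :=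
  (∑ m ∈ O, F.R m)
    - ((∑ m ∈ O, F.fs m)
      + (∑ n ∈ O.image (fun m => (π m).1), F.fp n)
      + (∑ k ∈ O.image (fun m => (π m).2.1), F.fw k)
      + (∑ j ∈ O.image (fun m => (π m).2.2), F.fd j)
      + (∑ m ∈ O, (F.cNK (π m).1 (π m).2.1 + F.cKJ (π m).2.1 (π m).2.2
          + F.cJM (π m).2.2 m)))

private lemma key {α : Type*} [DecidableEq α] (T : Finset α) (g : α → ℝ) (a : α) :
    (∑ x ∈ insert a T, g x) = (∑ x ∈ T, g x) + (if a ∈ T then 0 else g a) := by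
  by_cases h : a ∈ T
  · simp [Finset.insert_eq_self.mpr h, h]
  · simp [Finset.sum_insert h, h, add_comm]

/-- **Proposition 1(b).** Opening a closed store `m` and serving it via a path
`(n,k,j,m)` changes the objective by exactly
`R_m - c_{jm} - c_{kj} - c_{nk} - fs_m + Δ1 + Δ2 + Δ3`, where each `Δ` is minus
the corresponding facility's fixed cost if `m` will be the only store it serves
(i.e. the facility serves no other open store), else `0`. -/
theorem change_open_store (F : FLPData P W D S) (O : Finset S) (π : S → P × W × D)
    (m : S) (hm : m ∉ O) (n : P) (k : W) (j : D) :
    TP F (insert m O) (Function.update π m (n, k, j)) - TP F O π =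
      F.R m - F.cJM j m - F.cKJ k j - F.cNK n k - F.fs m
        + (if O.filter (fun m' => (π m').2.2 = j) = ∅ then -F.fd j else 0)
        + (if O.filter (fun m' => (π m').2.1 = k) = ∅ then -F.fw k else 0)
        + (if O.filter (fun m' => (π m').1 = n) = ∅ then -F.fp n else 0) := by

  classical
  set π' := Function.update π m (n, k, j) with hπ'
  have hupd : ∀ m' ∈ O, π' m' = π m' := fun m' hm' =>
    Function.update_of_ne (by rintro rfl; exact hm hm') _ _
  have himg1 : O.image (fun m' => (π' m').1) = O.image (fun m' => (π m').1) :=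
    Finset.image_congr (fun x hx => by rw [hupd x hx])
  have himg2 : O.image (fun m' => (π' m').2.1) = O.image (fun m' => (π m').2.1) :=
    Finset.image_congr (fun x hx => by rw [hupd x hx])
  have himg3 : O.image (fun m' => (π' m').2.2) = O.image (fun m' => (π m').2.2) :=
    Finset.image_congr (fun x hx => by rw [hupd x hx])
  have htr : ∀ m' ∈ O, (F.cNK (π' m').1 (π' m').2.1 + F.cKJ (π' m').2.1 (π' m').2.2
      + F.cJM (π' m').2.2 m') = (F.cNK (π m').1 (π m').2.1 + F.cKJ (π m').2.1 (π m').2.2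
      + F.cJM (π m').2.2 m') := fun m' hm' => by rw [hupd m' hm']
  have hc1 : (O.filter (fun m' => (π m').1 = n) = ∅) ↔ n ∉ O.image (fun m' => (π m').1) := by
    rw [Finset.filter_eq_empty_iff]; simp [Finset.mem_image]
  have hc2 : (O.filter (fun m' => (π m').2.1 = k) = ∅) ↔ k ∉ O.image (fun m' => (π m').2.1) := by
    rw [Finset.filter_eq_empty_iff]; simp [Finset.mem_image]
  have hc3 : (O.filter (fun m' => (π m').2.2 = j) = ∅) ↔ j ∉ O.image (fun m' => (π m').2.2) := by
    rw [Finset.filter_eq_empty_iff]; simp [Finset.mem_image]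
  have hπm : π' m = (n, k, j) := Function.update_self _ _ _
  unfold TP
  rw [Finset.sum_insert hm, Finset.sum_insert hm, Finset.sum_insert hm,
    Finset.image_insert, Finset.image_insert, Finset.image_insert,
    hπm]
  dsimp only
  rw [himg1, himg2, himg3, Finset.sum_congr rfl htr]
  have e1 : ∑ x ∈ insert n (O.image fun m' => (π m').1), F.fp x
      = (∑ x ∈ O.image (fun m' => (π m').1), F.fp x)
        + (if n ∈ O.image (fun m' => (π m').1) then 0 else F.fp n) := key _ _ _
  have e2 : ∑ x ∈ insert k (O.image fun m' => (π m').2.1), F.fw x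
      = (∑ x ∈ O.image (fun m' => (π m').2.1), F.fw x)
        + (if k ∈ O.image (fun m' => (π m').2.1) then 0 else F.fw k) := key _ _ _
  have e3 : ∑ x ∈ insert j (O.image fun m' => (π m').2.2), F.fd x
      = (∑ x ∈ O.image (fun m' => (π m').2.2), F.fd x)
        + (if j ∈ O.image (fun m' => (π m').2.2) then 0 else F.fd j) := key _ _ _
  rw [e1, e2, e3]
  by_cases h1 : n ∈ O.image (fun m' => (π m').1) <;>
  by_cases h2 : k ∈ O.image (fun m' => (π m').2.1) <;>
  by_cases h3 : j ∈ O.image (fun m' => (π m').2.2) <;>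
    simp only [h1, h2, h3, if_pos, if_neg, hc1, hc2, hc3, if_true, if_false,
      not_true, not_false_iff] <;> ring
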